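/- arXiv:math/0610856 — 3 statements merged into one kernel-verified Lean document; each statement's English description precedes it below -/
import Mathlib

section
/- Let C be a finite set of points on the unit sphere S^{n-1} in R^n, let e be a fixed unit vector, and let θ, φ be fixed angles with cos φ ≥ 0 and 0 ≤ cos θ < cos²φ, such that every point c in C satisfies e·c ≥ cos φ and any two distinct points c, c' in C satisfy c·c' ≤ cos θ. Then card(C) ≤ (1 - cos θ)/(cos²φ - cos θ). -/
open scoped RealInnerProductSpace

theorem cap_code_bound_example1 (n : ℕ) (θ φ : ℝ)
    (e : EuclideanSpace ℝ (Fin n)) (he : ‖e‖ = 1)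
    (hφ : 0 ≤ Real.cos φ) (hθ0 : 0 ≤ Real.cos θ)
    (hθφ : Real.cos θ < (Real.cos φ) ^ 2)
    (C : Finset (EuclideanSpace ℝ (Fin n)))
    (hunit : ∀ c ∈ C, ‖c‖ = 1)
    (hhemi : ∀ c ∈ C, 0 ≤ ⟪e, c⟫)
    (hcap : ∀ c ∈ C, Real.cos φ ≤ ⟪e, c⟫)
    (hdist : ∀ c ∈ C, ∀ c' ∈ C, c ≠ c' → ⟪c, c'⟫ ≤ Real.cos θ) :
    (C.card : ℝ) ≤ (1 - Real.cos θ) / ((Real.cos φ) ^ 2 - Real.cos θ) := by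
  set N : ℝ := (C.card : ℝ) with hN
  have hden : 0 < (Real.cos φ) ^ 2 - Real.cos θ := by linarith
  have h1θ : 0 ≤ 1 - Real.cos θ := by nlinarith [Real.cos_le_one φ, Real.neg_one_le_cos φ]
  rcases Finset.eq_empty_or_nonempty C with hC | hC
  · simp [hN, hC]
    positivity
  classical
  have hNpos : 0 < N := by
    rw [hN]
    exact_mod_cast Finset.card_pos.mpr hC
  set s : EuclideanSpace ℝ (Fin n) := ∑ c ∈ C, c with hs
  have hes : N * Real.cos φ ≤ ⟪e, s⟫ := by
    rw [hs, inner_sum]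
    calc N * Real.cos φ = ∑ _c ∈ C, Real.cos φ := by rw [Finset.sum_const]; ring
    _ ≤ _ := Finset.sum_le_sum fun c hc => hcap c hc
  have hcs : ⟪e, s⟫ ≤ ‖s‖ := by
    calc ⟪e, s⟫ ≤ ‖e‖ * ‖s‖ := real_inner_le_norm e s
    _ = ‖s‖ := by rw [he, one_mul]
  have hss : ⟪s, s⟫ ≤ N * (1 + (N - 1) * Real.cos θ) := by
    rw [hs, inner_sum]
    have key : ∀ c ∈ C, ⟪(∑ c' ∈ C, c'), c⟫ ≤ 1 + (N - 1) * Real.cos θ := by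
      intro c hc
      rw [sum_inner, ← Finset.add_sum_erase _ _ hc]
      have h1 : ⟪c, c⟫ = 1 := by
        rw [real_inner_self_eq_norm_sq, hunit c hc]; norm_num
      have h2 : ∑ c' ∈ C.erase c, ⟪c', c⟫ ≤ (N - 1) * Real.cos θ := by
        calc ∑ c' ∈ C.erase c, ⟪c', c⟫ ≤ ∑ _c' ∈ C.erase c, Real.cos θ :=
              Finset.sum_le_sum fun c' hc' =>
                hdist c' (Finset.mem_of_mem_erase hc') c hc
                  (Finset.ne_of_mem_erase hc')
        _ = ((C.erase c).card : ℝ) * Real.cos θ := by rw [Finset.sum_const]; ring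
        _ = (N - 1) * Real.cos θ := by
              rw [Finset.card_erase_of_mem hc]
              have : (1 : ℕ) ≤ C.card := Finset.card_pos.mpr hC
              congr 1
              push_cast [Nat.cast_sub this]
              ring
      linarith
    calc ∑ c ∈ C, ⟪(∑ c' ∈ C, c'), c⟫ ≤ ∑ _c ∈ C, (1 + (N - 1) * Real.cos θ) :=
          Finset.sum_le_sum key
    _ = N * (1 + (N - 1) * Real.cos θ) := by rw [Finset.sum_const]; ring
  have hns : ‖s‖ ^ 2 = ⟪s, s⟫ := (real_inner_self_eq_norm_sq s).symm
  have hsq : (N * Real.cos φ) ^ 2 ≤ ‖s‖ ^ 2 := by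
    have h0 : 0 ≤ N * Real.cos φ := mul_nonneg hNpos.le hφ
    nlinarith [hes.trans hcs]
  have hmain : N * ((Real.cos φ) ^ 2 - Real.cos θ) ≤ 1 - Real.cos θ := by
    have : N ^ 2 * (Real.cos φ) ^ 2 ≤ N * (1 + (N - 1) * Real.cos θ) := by
      nlinarith
    nlinarith
  rw [le_div_iff₀ hden]
  linarith
end

section
/- Let n ≥ 1 and let C be a finite set of unit vectors in R^n such that e·c ≥ 0 for all c ∈ C (for a fixed unit vector e) and c·c' ≤ 0 for all distinct c, c' ∈ C. Then card(C) ≤ 2n - 1. -/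
open scoped RealInnerProductSpace

open Module Finset in
private lemma pairwise_nonpos_card_le (n : ℕ) :
    ∀ (m : ℕ) (K : Submodule ℝ (EuclideanSpace ℝ (Fin n))),
      finrank ℝ K ≤ m →
      ∀ C : Finset (EuclideanSpace ℝ (Fin n)),
        (↑C ⊆ (K : Set (EuclideanSpace ℝ (Fin n)))) →
        (∀ c ∈ C, ‖c‖ = 1) →
        (∀ c ∈ C, ∀ c' ∈ C, c ≠ c' → ⟪c, c'⟫ ≤ 0) →
        C.card ≤ 2 * m := by
  classical
  intro m
  induction m with
  | zero =>
    intro K hK C hCK hunit _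
    rcases C.eq_empty_or_nonempty with rfl | ⟨v, hv⟩
    · simp
    · exfalso
      have hK0 : K = ⊥ := Submodule.finrank_eq_zero.mp (Nat.le_zero.mp hK)
      have hv0 : v = 0 := by
        have := hCK hv
        rw [hK0] at this
        simpa using this
      have h1 := hunit v hv
      rw [hv0, norm_zero] at h1
      exact one_ne_zero h1.symm
  | succ m ih =>
    intro K hK C hCK hunit hdist
    rcases C.eq_empty_or_nonempty with rfl | ⟨v, hv⟩
    · simp
    have hvK : v ∈ K := hCK hv
    have hvnorm : ‖v‖ = 1 := hunit v hv
    have hvne : v ≠ 0 := by intro h; rw [h, norm_zero] at hvnorm; exact one_ne_zero hvnorm.symm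
    have hspan : finrank ℝ (ℝ ∙ v : Submodule ℝ (EuclideanSpace ℝ (Fin n))) = 1 :=
      finrank_span_singleton hvne
    have hle : (ℝ ∙ v) ≤ K := by rwa [Submodule.span_singleton_le_iff_mem]
    have h1 := Submodule.finrank_add_inf_finrank_orthogonal (𝕜 := ℝ) hle
    have hK'rank :
        finrank ℝ ((ℝ ∙ v)ᗮ ⊓ K : Submodule ℝ (EuclideanSpace ℝ (Fin n))) ≤ m := by omega
    set D : Finset (EuclideanSpace ℝ (Fin n)) := (C.erase v).erase (-v) with hD
    set q : EuclideanSpace ℝ (Fin n) → EuclideanSpace ℝ (Fin n) :=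
      fun w => ‖w - ⟪v, w⟫ • v‖⁻¹ • (w - ⟪v, w⟫ • v) with hq
    have hDsub : ∀ w ∈ D, w ∈ C ∧ w ≠ v ∧ w ≠ -v := by
      intro w hw
      simp only [hD, Finset.mem_erase] at hw
      exact ⟨hw.2.2, hw.2.1, hw.1⟩
    have hwne : ∀ w ∈ D, w - ⟪v, w⟫ • v ≠ 0 := by
      intro w hw h
      obtain ⟨hwC, hwv, hwnv⟩ := hDsub w hw
      have hweq : w = ⟪v, w⟫ • v := (sub_eq_zero.mp h)
      have hnorm : ‖w‖ = |⟪v, w⟫| * ‖v‖ := by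
        calc ‖w‖ = ‖⟪v, w⟫ • v‖ := by rw [← hweq]
        _ = |⟪v, w⟫| * ‖v‖ := by rw [norm_smul, Real.norm_eq_abs]
      rw [hunit w hwC, hvnorm, mul_one] at hnorm
      rcases (abs_eq (by norm_num : (0:ℝ) ≤ 1)).mp hnorm.symm with h1 | h1
      · exact hwv (by rw [hweq, h1, one_smul])
      · exact hwnv (by rw [hweq, h1]; simp)
    have hinner' : ∀ (w1 w2 : EuclideanSpace ℝ (Fin n)),
        ⟪w1 - ⟪v, w1⟫ • v, w2 - ⟪v, w2⟫ • v⟫ = ⟪w1, w2⟫ - ⟪v, w1⟫ * ⟪v, w2⟫ := by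
      intro w1 w2
      simp only [inner_sub_left, inner_sub_right, real_inner_smul_left, real_inner_smul_right]
      rw [real_inner_self_eq_norm_sq, hvnorm, real_inner_comm w1 v]
      ring
    have hinnerq : ∀ w1 ∈ D, ∀ w2 ∈ D, w1 ≠ w2 → ⟪q w1, q w2⟫ ≤ 0 := by
      intro w1 h1 w2 h2 hne
      obtain ⟨h1C, h1v, _⟩ := hDsub w1 h1
      obtain ⟨h2C, h2v, _⟩ := hDsub w2 h2
      have hv1 : ⟪v, w1⟫ ≤ 0 := hdist v hv w1 h1C (Ne.symm h1v)
      have hv2 : ⟪v, w2⟫ ≤ 0 := hdist v hv w2 h2C (Ne.symm h2v)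
      have h12 : ⟪w1, w2⟫ ≤ 0 := hdist w1 h1C w2 h2C hne
      have key : ⟪w1 - ⟪v, w1⟫ • v, w2 - ⟪v, w2⟫ • v⟫ ≤ 0 := by
        rw [hinner' w1 w2]; nlinarith
      simp only [hq, real_inner_smul_left, real_inner_smul_right]
      have hn1 : (0:ℝ) ≤ ‖w1 - ⟪v, w1⟫ • v‖⁻¹ := by positivity
      have hn2 : (0:ℝ) ≤ ‖w2 - ⟪v, w2⟫ • v‖⁻¹ := by positivity
      exact mul_nonpos_of_nonneg_of_nonpos hn2 (mul_nonpos_of_nonneg_of_nonpos hn1 key)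
    have hqunit : ∀ w ∈ D, ‖q w‖ = 1 := by
      intro w hw
      have hne0 := hwne w hw
      simp only [hq]
      rw [norm_smul, norm_inv, norm_norm, inv_mul_cancel₀ (norm_ne_zero_iff.mpr hne0)]
    have hqmem : ∀ w ∈ D, q w ∈ ((ℝ ∙ v)ᗮ ⊓ K : Submodule ℝ (EuclideanSpace ℝ (Fin n))) := by
      intro w hw
      obtain ⟨hwC, _, _⟩ := hDsub w hw
      constructor
      · apply Submodule.smul_mem
        rw [Submodule.mem_orthogonal_singleton_iff_inner_right]
        rw [inner_sub_right, real_inner_smul_right, real_inner_self_eq_norm_sq, hvnorm]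
        ring
      · exact Submodule.smul_mem _ _ (K.sub_mem (hCK hwC) (K.smul_mem _ hvK))
    have hinj : Set.InjOn q ↑D := by
      intro w1 h1 w2 h2 heq
      by_contra hne
      have h := hinnerq w1 h1 w2 h2 hne
      rw [heq, real_inner_self_eq_norm_sq, hqunit w2 h2] at h
      norm_num at h
    have hcard : (D.image q).card = D.card := Finset.card_image_of_injOn hinj
    have hDbound : (D.image q).card ≤ 2 * m := by
      apply ih _ hK'rank
      · intro x hx
        simp only [Finset.coe_image, Set.mem_image, Finset.mem_coe] at hx
        obtain ⟨w, hw, rfl⟩ := hx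
        exact hqmem w hw
      · intro c hc
        obtain ⟨w, hw, rfl⟩ := Finset.mem_image.mp hc
        exact hqunit w hw
      · intro c hc c' hc' hne
        obtain ⟨w, hw, rfl⟩ := Finset.mem_image.mp hc
        obtain ⟨w', hw', rfl⟩ := Finset.mem_image.mp hc'
        exact hinnerq w hw w' hw' (fun h => hne (by rw [h]))
    have h2 : (C.erase v).card - 1 ≤ D.card := by
      rw [hD]; exact Finset.pred_card_le_card_erase
    have h3 : (C.erase v).card = C.card - 1 := Finset.card_erase_of_mem hv
    have h4 : 1 ≤ C.card := Finset.card_pos.mpr ⟨v, hv⟩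
    omega

theorem hemisphere_orthogonal_code_bound (n : ℕ) (hn : 1 ≤ n)
    (e : EuclideanSpace ℝ (Fin n)) (he : ‖e‖ = 1)
    (C : Finset (EuclideanSpace ℝ (Fin n)))
    (hunit : ∀ c ∈ C, ‖c‖ = 1)
    (hhemi : ∀ c ∈ C, 0 ≤ ⟪e, c⟫)
    (hdist : ∀ c ∈ C, ∀ c' ∈ C, c ≠ c' → ⟪c, c'⟫ ≤ 0) :
    C.card ≤ 2 * n - 1 := by
  classical
  have hne : -e ∉ C := by
    intro h
    have := hhemi (-e) h
    rw [inner_neg_right, real_inner_self_eq_norm_sq, he] at this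
    norm_num at this
  have hcard : (insert (-e) C).card = C.card + 1 := Finset.card_insert_of_notMem hne
  have hbound : (insert (-e) C).card ≤ 2 * n := by
    apply pairwise_nonpos_card_le n n ⊤ (by simp)
    · intro x _; trivial
    · intro c hc
      rcases Finset.mem_insert.mp hc with rfl | hc
      · rw [norm_neg]; exact he
      · exact hunit c hc
    · intro c hc c' hc' hne'
      rcases Finset.mem_insert.mp hc with rfl | hc <;>
        rcases Finset.mem_insert.mp hc' with rfl | hc'
      · exact absurd rfl hne'
      · rw [inner_neg_left]; linarith [hhemi c' hc']
      · rw [inner_neg_right, real_inner_comm]; linarith [hhemi c hc]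
      · exact hdist c hc c' hc' hne'
  omega
end

section
/- Let cos θ ≤ 1/n and cos φ > -1/n, and set f_0 := (1/n - cos θ) + (1/n + cos φ)² / ((1+cos φ)²/(1-cos θ) + 1 - 1/n). If f_0 > 0, then any code C ⊂ Cap(e,φ) ⊂ S^{n-1} with minimal angular distance θ satisfies card(C) ≤ 2(1 - cos θ)/f_0; moreover this bound is strictly smaller than the LP bound 2(1-cos θ)/(1/n - cos θ) for the whole sphere when cos θ < 1/n. -/
/-!
Sum the test polynomial `F(⟪c, c'⟫, ⟪e, c⟫, ⟪e, c'⟫)` over all ordered pairs of points of the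
code. Off the diagonal `F ≤ 0`, because `-1 ≤ ⟪c, c'⟫ ≤ cos θ` and `cos φ ≤ ⟪e, c⟫ ≤ 1`; on the
diagonal `F ≤ 2 (1 - cos θ)`. So the sum is at most `2 (1 - cos θ) |C|`.

From below, the pair sums of `⟪c, c'⟫` and `⟪c, c'⟫²` are the squared norms of `∑ c` and of
`∑ (c cᵀ - I / n)`, while the sums of `⟪e, c⟫` and `⟪e, c⟫²` are their inner products with `e` and
`e eᵀ - I / n`. Completing both squares bounds the pair sum below by
`|C|² ((1/n - cos θ) + 2 a (1/n + cos φ) - a² D)`, where `D` is the denominator in `f₀`, and the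
optimal `a = (1/n + cos φ) / D` turns this into `|C|² f₀`.
-/

open scoped RealInnerProductSpace
open Finset

/-- The polynomial `F` of the paper, with `k = cos θ` and `p = cos φ`. -/
def capPoly (k p a t u v : ℝ) : ℝ :=
  (t + 1) * (t - k) + a * ((u - p) * (u - 1) + (v - p) * (v - 1))

lemma sum_sum_capPoly {α : Type*} (s : Finset α) (t : α → α → ℝ) (u : α → ℝ) (k p a : ℝ) :
    ∑ i ∈ s, ∑ j ∈ s, capPoly k p a (t i j) (u i) (u j) =
      ∑ i ∈ s, ∑ j ∈ s, t i j ^ 2 + (1 - k) * ∑ i ∈ s, ∑ j ∈ s, t i j - k * #s ^ 2 +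
        2 * a * #s * (∑ i ∈ s, u i ^ 2 - (1 + p) * ∑ i ∈ s, u i + p * #s) := by
  have hF : ∀ t u v, capPoly k p a t u v =
      t ^ 2 + (1 - k) * t - k + a * (u ^ 2 - (1 + p) * u + p) + a * (v ^ 2 - (1 + p) * v + p) :=
    fun t u v => by unfold capPoly; ring
  simp only [hF, sum_add_distrib, sum_sub_distrib, ← mul_sum, sum_const, nsmul_eq_mul]
  ring

lemma capPoly_one_le {k p a u : ℝ} (ha : 0 ≤ a) (hpu : p ≤ u) (hu : u ≤ 1) :
    capPoly k p a 1 u u ≤ 2 * (1 - k) := by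
  have : (u - p) * (u - 1) ≤ 0 := mul_nonpos_of_nonneg_of_nonpos (by linarith) (by linarith)
  unfold capPoly
  nlinarith

lemma capPoly_nonpos {k p a t u v : ℝ} (ha : 0 ≤ a) (ht : -1 ≤ t) (htk : t ≤ k)
    (hpu : p ≤ u) (hu : u ≤ 1) (hpv : p ≤ v) (hv : v ≤ 1) :
    capPoly k p a t u v ≤ 0 := by
  have h₁ : (t + 1) * (t - k) ≤ 0 := mul_nonpos_of_nonneg_of_nonpos (by linarith) (by linarith)
  have h₂ : (u - p) * (u - 1) ≤ 0 := mul_nonpos_of_nonneg_of_nonpos (by linarith) (by linarith)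
  have h₃ : (v - p) * (v - 1) ≤ 0 := mul_nonpos_of_nonneg_of_nonpos (by linarith) (by linarith)
  unfold capPoly
  nlinarith

section InnerProductSpace

variable {F : Type*} [NormedAddCommGroup F] [InnerProductSpace ℝ F]

lemma two_mul_inner_sub_sq_mul_inner_self_le (u v : F) (t : ℝ) :
    2 * t * ⟪u, v⟫ - t ^ 2 * ⟪u, u⟫ ≤ ⟪v, v⟫ := by
  have h := real_inner_self_nonneg (x := v - t • u)
  simp only [inner_sub_left, inner_sub_right, real_inner_smul_left, real_inner_smul_right,
    real_inner_comm u v] at h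
  linarith

lemma sum_inner_sum {α β : Type*} (s : Finset α) (t : Finset β) (f : α → F) (g : β → F) :
    ⟪∑ i ∈ s, f i, ∑ j ∈ t, g j⟫ = ∑ i ∈ s, ∑ j ∈ t, ⟪f i, g j⟫ := by
  rw [sum_inner]
  simp only [inner_sum]

lemma sum_sum_capPoly_le {k p a : ℝ} (ha : 0 ≤ a) {e : F} (he : ‖e‖ = 1) {C : Finset F}
    (hunit : ∀ c ∈ C, ‖c‖ = 1) (hcap : ∀ c ∈ C, p ≤ ⟪e, c⟫)
    (hdist : ∀ c ∈ C, ∀ c' ∈ C, c ≠ c' → ⟪c, c'⟫ ≤ k) :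
    ∑ c ∈ C, ∑ c' ∈ C, capPoly k p a ⟪c, c'⟫ ⟪e, c⟫ ⟪e, c'⟫ ≤ #C * (2 * (1 - k)) := by
  classical
  rw [← nsmul_eq_mul]
  refine sum_le_card_nsmul _ _ _ fun c hc => ?_
  rw [← add_sum_erase C _ hc]
  have hdiag : capPoly k p a ⟪c, c⟫ ⟪e, c⟫ ⟪e, c⟫ ≤ 2 * (1 - k) := by
    rw [real_inner_self_eq_norm_sq, hunit c hc, one_pow]
    exact capPoly_one_le ha (hcap c hc) (real_inner_le_one_of_norm_eq_one he (hunit c hc))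
  have hoff : ∑ c' ∈ C.erase c, capPoly k p a ⟪c, c'⟫ ⟪e, c⟫ ⟪e, c'⟫ ≤ 0 := by
    refine sum_nonpos fun c' hc' => ?_
    obtain ⟨hne, hc'⟩ := mem_erase.mp hc'
    exact capPoly_nonpos ha (neg_one_le_real_inner_of_norm_eq_one (hunit c hc) (hunit c' hc'))
      (hdist c hc c' hc' hne.symm) (hcap c hc)
      (real_inner_le_one_of_norm_eq_one he (hunit c hc)) (hcap c' hc')
      (real_inner_le_one_of_norm_eq_one he (hunit c' hc'))
  linarith

end InnerProductSpace

section Euclidean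

variable {ι : Type*} [Fintype ι]

lemma EuclideanSpace.sum_mul_self_eq_one {x : EuclideanSpace ℝ ι} (hx : ‖x‖ = 1) :
    ∑ i, x i * x i = 1 := by
  simpa [EuclideanSpace.norm_eq, Real.sqrt_eq_one, sq] using hx

variable [DecidableEq ι]

noncomputable def tracelessOuter (x : EuclideanSpace ℝ ι) : EuclideanSpace ℝ (ι × ι) :=
  WithLp.toLp 2 fun q => x q.1 * x q.2 - if q.1 = q.2 then 1 / (Fintype.card ι : ℝ) else 0

lemma inner_tracelessOuter {x y : EuclideanSpace ℝ ι} (hx : ‖x‖ = 1) (hy : ‖y‖ = 1) :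
    ⟪tracelessOuter x, tracelessOuter y⟫ = ⟪x, y⟫ ^ 2 - 1 / Fintype.card ι := by
  have hcard : (Fintype.card ι : ℝ) * (1 / Fintype.card ι * (1 / Fintype.card ι)) =
      1 / Fintype.card ι := by
    rcases eq_or_ne (Fintype.card ι : ℝ) 0 with h | h
    · simp [h]
    · field_simp
  simp only [tracelessOuter, PiLp.inner_apply, RCLike.inner_apply, conj_trivial,
    Fintype.sum_prod_type, mul_sub, sub_mul, mul_ite, ite_mul, mul_zero, zero_mul,
    sum_sub_distrib, sum_ite_eq, mem_univ, if_true]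
  rw [sq, sum_mul_sum, ← mul_sum, ← sum_mul, EuclideanSpace.sum_mul_self_eq_one hx,
    EuclideanSpace.sum_mul_self_eq_one hy, sum_const, card_univ, nsmul_eq_mul, hcard]
  simp only [mul_mul_mul_comm]
  ring

lemma sq_card_mul_le_sum_sum_capPoly {k p a : ℝ} (hk : k < 1) {e : EuclideanSpace ℝ ι}
    (he : ‖e‖ = 1) {C : Finset (EuclideanSpace ℝ ι)} (hunit : ∀ c ∈ C, ‖c‖ = 1) :
    (#C : ℝ) ^ 2 * ((1 / Fintype.card ι - k) + 2 * a * (1 / Fintype.card ι + p) -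
        a ^ 2 * ((1 + p) ^ 2 / (1 - k) + 1 - 1 / Fintype.card ι)) ≤
      ∑ c ∈ C, ∑ c' ∈ C, capPoly k p a ⟪c, c'⟫ ⟪e, c⟫ ⟪e, c'⟫ := by
  rw [sum_sum_capPoly]
  set q : ℝ := 1 / Fintype.card ι
  set N : ℝ := (#C : ℝ)
  set X := ∑ c ∈ C, c
  set M := ∑ c ∈ C, tracelessOuter c
  have hS₁ : ∑ c ∈ C, ∑ c' ∈ C, ⟪c, c'⟫ = ⟪X, X⟫ := (sum_inner_sum C C id id).symm
  have hS₂ : ∑ c ∈ C, ∑ c' ∈ C, ⟪c, c'⟫ ^ 2 = ⟪M, M⟫ + q * N ^ 2 := by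
    rw [sum_inner_sum, sum_congr rfl fun c hc => sum_congr rfl fun c' hc' =>
      inner_tracelessOuter (hunit c hc) (hunit c' hc')]
    simp only [sum_sub_distrib, sum_const, nsmul_eq_mul]
    ring
  have hU₁ : ∑ c ∈ C, ⟪e, c⟫ = ⟪e, X⟫ := (inner_sum C id e).symm
  have hU₂ : ∑ c ∈ C, ⟪e, c⟫ ^ 2 = ⟪tracelessOuter e, M⟫ + q * N := by
    rw [inner_sum, sum_congr rfl fun c hc => inner_tracelessOuter he (hunit c hc)]
    simp only [sum_sub_distrib, sum_const, nsmul_eq_mul]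
    ring
  have hE : ⟪tracelessOuter e, tracelessOuter e⟫ = 1 - q := by
    rw [inner_tracelessOuter he he, real_inner_self_eq_norm_sq, he]
    ring
  -- the multipliers cancel the terms linear in `⟪tracelessOuter e, M⟫` and `⟪e, X⟫`
  have h₁ := two_mul_inner_sub_sq_mul_inner_self_le (tracelessOuter e) M (-(a * N))
  have h₂ : 2 * a * (1 + p) * N * ⟪e, X⟫ - N ^ 2 * a ^ 2 * ((1 + p) ^ 2 / (1 - k)) ≤
      (1 - k) * ⟪X, X⟫ := by
    have h := mul_le_mul_of_nonneg_left
      (two_mul_inner_sub_sq_mul_inner_self_le e X (a * (1 + p) * N / (1 - k))) (sub_pos.2 hk).le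
    rw [real_inner_self_eq_norm_sq, he] at h
    refine (le_of_eq ?_).trans h
    field_simp [(sub_pos.2 hk).ne']
  rw [hS₁, hS₂, hU₁, hU₂]
  rw [hE] at h₁
  linarith

end Euclidean

theorem cap_code_degree_two_bound (n : ℕ) (hn : 1 ≤ n) (θ φ : ℝ)
    (e : EuclideanSpace ℝ (Fin n)) (he : ‖e‖ = 1)
    (hθ : Real.cos θ ≤ 1 / n) (hφ : -(1 / (n : ℝ)) < Real.cos φ)
    (f₀ : ℝ)
    (hf₀def : f₀ = (1 / n - Real.cos θ) +
      (1 / n + Real.cos φ) ^ 2 /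
        ((1 + Real.cos φ) ^ 2 / (1 - Real.cos θ) + 1 - 1 / n))
    (hf₀ : 0 < f₀)
    (C : Finset (EuclideanSpace ℝ (Fin n)))
    (hunit : ∀ c ∈ C, ‖c‖ = 1)
    (hcap : ∀ c ∈ C, Real.cos φ ≤ ⟪e, c⟫)
    (hdist : ∀ c ∈ C, ∀ c' ∈ C, c ≠ c' → ⟪c, c'⟫ ≤ Real.cos θ) :
    (C.card : ℝ) ≤ 2 * (1 - Real.cos θ) / f₀ ∧
      (Real.cos θ < 1 / n →
        2 * (1 - Real.cos θ) / f₀ <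
          2 * (1 - Real.cos θ) / (1 / n - Real.cos θ)) := by
  set k := Real.cos θ
  set p := Real.cos φ
  set q : ℝ := 1 / n
  have hq : q ≤ 1 := div_le_one_of_le₀ (by exact_mod_cast hn) (Nat.cast_nonneg n)
  have hk : k < 1 := by
    -- `k = 1` forces `n = 1`, and then `f₀ = 0` because of the division by `1 - k = 0`
    by_contra! hk
    have hk1 : k = 1 := le_antisymm (Real.cos_le_one θ) hk
    have hq1 : q = 1 := le_antisymm hq (hk1 ▸ hθ)
    rw [hf₀def, hk1, hq1] at hf₀
    norm_num at hf₀
  set D := (1 + p) ^ 2 / (1 - k) + 1 - q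
  have hD : 0 < D := by
    have : 0 < (1 + p) ^ 2 / (1 - k) := div_pos (by nlinarith) (by linarith)
    linarith
  set a := (q + p) / D
  have ha : 0 ≤ a := div_nonneg (by linarith) hD.le
  have hf₀a : f₀ = (q - k) + 2 * a * (q + p) - a ^ 2 * D := by
    rw [hf₀def, show a = (q + p) / D from rfl]
    field_simp
    ring
  have hlower := sq_card_mul_le_sum_sum_capPoly (p := p) (a := a) hk he hunit
  have hupper := sum_sum_capPoly_le ha he hunit hcap hdist
  simp only [Fintype.card_fin] at hlower
  rw [← hf₀a] at hlower
  refine ⟨?_, fun hkq => div_lt_div_of_pos_left (by linarith) (by linarith) ?_⟩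
  · rw [le_div_iff₀ hf₀]
    nlinarith
  · have : 0 < (q + p) ^ 2 / D := div_pos (by nlinarith) hD
    linarith
end
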